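/- Let V be a finite type with Fintype.card V = N ≥ 1, let E : V → V → Prop be strongly connected, let Δ ≥ 0 and t₀ be real numbers, let z : V, and let f : V → ℝ satisfy f z ≤ t₀ + Δ and, for all u w : V, E u w → f w ≤ f u + Δ. Then for every vertex u, f u ≤ t₀ + N·Δ. -/
import Mathlib

open Classical in
lemma boundary_cross {V : Type*} {E : V → V → Prop} {p : V → Prop} {z v : V}
    (h : Relation.ReflTransGen E z v) (hz : p z) (hv : ¬ p v) :
    ∃ a b, p a ∧ ¬ p b ∧ E a b := by
  induction h with
  | refl => exact absurd hz hv
  | @tail b c h hab ih =>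
    by_cases hc : p b
    · exact ⟨b, c, hc, hv, hab⟩
    · exact ih hc

theorem vote_reaches_all_contracts_in_time {V : Type*} [Fintype V] (N : ℕ)
    (hN : Fintype.card V = N) (hN1 : 1 ≤ N)
    (E : V → V → Prop) (hsc : ∀ u v : V, Relation.ReflTransGen E u v)
    (Δ t₀ : ℝ) (hΔ : 0 ≤ Δ) (z : V) (f : V → ℝ)
    (hz : f z ≤ t₀ + Δ) (hstep : ∀ u w : V, E u w → f w ≤ f u + Δ) :
    ∀ u : V, f u ≤ t₀ + N * Δ := by
  classical
  set S : ℕ → Finset V := fun k => Finset.univ.filter (fun u => f u ≤ t₀ + (k+1) * Δ) with hS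
  have hmem : ∀ k u, u ∈ S k ↔ f u ≤ t₀ + (k+1) * Δ := by
    intro k u; simp [hS]
  have hmono : ∀ k, S k ⊆ S (k+1) := by
    intro k u hu
    rw [hmem] at hu ⊢
    push_cast
    nlinarith
  have hcard : ∀ k, min (k+1) N ≤ (S k).card := by
    intro k
    induction k with
    | zero =>
      have : z ∈ S 0 := by rw [hmem]; push_cast; linarith
      have h1 : 1 ≤ (S 0).card := Finset.card_pos.mpr ⟨z, this⟩
      omega
    | succ k ih =>
      by_cases hfull : ∀ v : V, v ∈ S k
      · have : min (k+1+1) N ≤ (S k).card := by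
          have : Finset.univ ⊆ S k := fun v _ => hfull v
          have := Finset.card_le_card this
          simp [Finset.card_univ, hN] at this
          omega
        calc min (k+1+1) N ≤ (S k).card := this
          _ ≤ (S (k+1)).card := Finset.card_le_card (hmono k)
      · push_neg at hfull
        obtain ⟨v, hv⟩ := hfull
        have hzS : z ∈ S k := by rw [hmem]; push_cast; nlinarith
        obtain ⟨a, b, ha, hb, hab⟩ := boundary_cross (p := fun u => u ∈ S k) (hsc z v) hzS hv
        have hbS : b ∈ S (k+1) := by
          rw [hmem]
          rw [hmem] at ha
          have := hstep a b hab
          push_cast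
          push_cast at ha
          linarith
        have hsub : insert b (S k) ⊆ S (k+1) := by
          intro x hx
          rcases Finset.mem_insert.mp hx with rfl | hx
          · exact hbS
          · exact hmono k hx
        have := Finset.card_le_card hsub
        rw [Finset.card_insert_of_notMem hb] at this
        omega
  intro u
  have h1 : min ((N-1)+1) N ≤ (S (N-1)).card := hcard (N-1)
  have h2 : (S (N-1)).card ≤ N := by
    have := Finset.card_le_card (Finset.subset_univ (S (N-1)))
    simpa [Finset.card_univ, hN] using this
  have hfull : S (N-1) = Finset.univ := by
    apply Finset.eq_univ_of_card
    rw [hN]; omega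
  have hu : u ∈ S (N-1) := hfull ▸ Finset.mem_univ u
  rw [hmem] at hu
  have : ((N-1 : ℕ) : ℝ) + 1 = (N : ℝ) := by
    have : (N-1)+1 = N := by omega
    exact_mod_cast congrArg (Nat.cast : ℕ → ℝ) this
  linarith [hu, this ▸ hu]
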